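/- arXiv:2106.08626 — 2 statements merged into one kernel-verified Lean document; each statement's English description precedes it below -/
import Mathlib

section
/- For the symmetric BAR transition kernel 𝒬 on ℝ given by 𝒬(x,·) = 𝒩(ax, σ²) with a ∈ (−1,1), σ > 0, and its invariant probability measure μ = 𝒩(0, σ²/(1−a²)), the kernel 𝒬 is L²(μ)-exponentially convergent with rate |a|: there exists a finite constant M such that for all f ∈ L²(μ) and all n ∈ ℕ, ‖𝒬^n f − ⟨μ,f⟩‖_{L²(μ)} ≤ M |a|^n ‖f‖_{L²(μ)}. -/
open MeasureTheory ProbabilityTheory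

/-- The symmetric BAR transition kernel `𝒬(x,·) = 𝒩(ax, σ²)` acting on functions:
`𝒬f(x) = ∫ f(y) 𝒬(x,dy)`. -/
noncomputable def barQfun (a σ : ℝ) (f : ℝ → ℝ) (x : ℝ) : ℝ :=
  ∫ y, f y ∂(gaussianReal (a * x) (Real.toNNReal (σ ^ 2)))

/-- `𝒬ⁿ f`, by iteration of `barQfun`. -/
noncomputable def barQfunIter (a σ : ℝ) (n : ℕ) (f : ℝ → ℝ) : ℝ → ℝ :=
  (barQfun a σ)^[n] f

/-!
Let `t = σ²/(1-a²)` and `μ = 𝒩(0,t)`. Gaussian kernels compose by convolution, so for `n ≥ 1`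
and `b = aⁿ` the measure `𝒬ⁿ(x,·)` is `𝒩(bx, t(1-b²))`, the Mehler kernel. Its density `r_x`
with respect to `μ` is explicit, and `𝒬ⁿf(x) - ⟨μ,f⟩` is the covariance of `f` and `r_x`
under `μ`, so Cauchy–Schwarz gives `(𝒬ⁿf(x) - ⟨μ,f⟩)² ≤ Var_μ(f) · Var_μ(r_x)`. Computing
Gaussian integrals, `∫ Var_μ(r_x) dμ(x) = b²/(1-b²)`, whence
`‖𝒬ⁿf - ⟨μ,f⟩‖ ≤ |a|ⁿ/√(1-a²) · ‖f‖`.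
-/

open Real

section L2

variable {α : Type*} [MeasurableSpace α] {μ : Measure α}

lemma eLpNorm_two_eq_ofReal_sqrt_integral_sq {f : α → ℝ} (hf : MemLp f 2 μ) :
    eLpNorm f 2 μ = ENNReal.ofReal √(∫ x, f x ^ 2 ∂μ) := by
  rw [hf.eLpNorm_eq_integral_rpow_norm two_ne_zero ENNReal.ofNat_ne_top, sqrt_eq_rpow]
  norm_num [Real.norm_eq_abs, sq_abs]

lemma eLpNorm_two_le_of_sq_le {g B : α → ℝ} (hB : Integrable B μ) (hgB : ∀ x, g x ^ 2 ≤ B x) :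
    eLpNorm g 2 μ ≤ ENNReal.ofReal √(∫ x, B x ∂μ) := by
  have hB0 : ∀ x, 0 ≤ B x := fun x => (sq_nonneg _).trans (hgB x)
  have hsqrtB : MemLp (fun x => √(B x)) 2 μ := by
    refine (memLp_two_iff_integrable_sq (continuous_sqrt.comp_aestronglyMeasurable hB.1)).2 ?_
    simpa only [sq_sqrt (hB0 _)] using hB
  calc eLpNorm g 2 μ ≤ eLpNorm (fun x => √(B x)) 2 μ :=
        eLpNorm_mono_real fun x => by
          rw [Real.norm_eq_abs, ← sqrt_sq_eq_abs]
          exact sqrt_le_sqrt (hgB x)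
    _ = ENNReal.ofReal √(∫ x, B x ∂μ) := by
        simp only [eLpNorm_two_eq_ofReal_sqrt_integral_sq hsqrtB, sq_sqrt (hB0 _)]

lemma inner_toLp_eq_integral_mul {f g : α → ℝ} (hf : MemLp f 2 μ) (hg : MemLp g 2 μ) :
    inner ℝ (hf.toLp f) (hg.toLp g) = ∫ x, f x * g x ∂μ := by
  rw [L2.inner_def]
  refine integral_congr_ae ?_
  filter_upwards [hf.coeFn_toLp, hg.coeFn_toLp] with x hfx hgx
  simp [hfx, hgx, mul_comm]

lemma sq_integral_mul_le {f g : α → ℝ} (hf : MemLp f 2 μ) (hg : MemLp g 2 μ) :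
    (∫ x, f x * g x ∂μ) ^ 2 ≤ (∫ x, f x ^ 2 ∂μ) * ∫ x, g x ^ 2 ∂μ := by
  have h := real_inner_mul_inner_self_le (hf.toLp f) (hg.toLp g)
  rw [inner_toLp_eq_integral_mul hf hg, inner_toLp_eq_integral_mul hf hf,
    inner_toLp_eq_integral_mul hg hg] at h
  simpa only [sq] using h

lemma integral_withDensity_ofReal {r f : α → ℝ} (hr : Measurable r) (hr0 : ∀ x, 0 ≤ r x) :
    ∫ x, f x ∂μ.withDensity (fun x => ENNReal.ofReal (r x)) = ∫ x, r x * f x ∂μ := by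
  rw [integral_withDensity_eq_integral_toReal_smul hr.ennreal_ofReal
    (ae_of_all _ fun _ => ENNReal.ofReal_lt_top)]
  simp only [ENNReal.toReal_ofReal (hr0 _), smul_eq_mul]

lemma integrable_withDensity_ofReal_of_memLp_two {r f : α → ℝ} (hr : Measurable r)
    (hr0 : ∀ x, 0 ≤ r x) (hr2 : MemLp r 2 μ) (hf : MemLp f 2 μ) :
    Integrable f (μ.withDensity fun x => ENNReal.ofReal (r x)) := by
  rw [integrable_withDensity_iff_integrable_smul' hr.ennreal_ofReal
    (ae_of_all _ fun _ => ENNReal.ofReal_lt_top)]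
  simp only [ENNReal.toReal_ofReal (hr0 _), smul_eq_mul]
  exact hr2.integrable_mul hf

variable [IsProbabilityMeasure μ]

lemma sq_covariance_le_variance_mul_variance {f g : α → ℝ} (hf : MemLp f 2 μ)
    (hg : MemLp g 2 μ) :
    cov[f, g; μ] ^ 2 ≤ Var[f; μ] * Var[g; μ] := by
  rw [covariance, variance_eq_integral hf.aemeasurable, variance_eq_integral hg.aemeasurable]
  exact sq_integral_mul_le (hf.sub (memLp_const _)) (hg.sub (memLp_const _))

lemma sq_integral_withDensity_sub_integral_le {r f : α → ℝ} (hr : Measurable r)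
    (hr0 : ∀ x, 0 ≤ r x) (hr2 : MemLp r 2 μ) (hr1 : ∫ x, r x ∂μ = 1) (hf : MemLp f 2 μ) :
    (∫ x, f x ∂μ.withDensity (fun x => ENNReal.ofReal (r x)) - ∫ x, f x ∂μ) ^ 2
      ≤ Var[f; μ] * Var[r; μ] := by
  have hcov : cov[f, r; μ]
      = ∫ x, f x ∂μ.withDensity (fun x => ENNReal.ofReal (r x)) - ∫ x, f x ∂μ := by
    rw [covariance_eq_sub hf hr2, integral_withDensity_ofReal hr hr0, hr1, mul_one]
    simp only [Pi.mul_apply, mul_comm]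
  rw [← hcov]
  exact sq_covariance_le_variance_mul_variance hf hr2

lemma ofReal_sqrt_variance_le_eLpNorm {f : α → ℝ} (hf : MemLp f 2 μ) :
    ENNReal.ofReal √Var[f; μ] ≤ eLpNorm f 2 μ := by
  rw [eLpNorm_two_eq_ofReal_sqrt_integral_sq hf]
  exact ENNReal.ofReal_le_ofReal (sqrt_le_sqrt (variance_le_expectation_sq hf.1))

lemma eLpNorm_sub_integral_le {f : α → ℝ} (hf : MemLp f 2 μ) :
    eLpNorm (fun x => f x - ∫ y, f y ∂μ) 2 μ ≤ eLpNorm f 2 μ := by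
  refine (eLpNorm_two_le_of_sq_le (B := fun x => (f x - ∫ y, f y ∂μ) ^ 2)
    (hf.sub (memLp_const _)).integrable_sq fun x => le_rfl).trans ?_
  rw [← variance_eq_integral hf.aemeasurable]
  exact ofReal_sqrt_variance_le_eLpNorm hf

end L2

section GaussianIntegrals

lemma exp_quadratic_eq_mul_exp_neg_mul_sq {α : ℝ} (hα : α ≠ 0) (β γ y : ℝ) :
    exp (β * y + γ - α * y ^ 2)
      = exp (β ^ 2 / (4 * α) + γ) * exp (-α * (y - β / (2 * α)) ^ 2) := by
  rw [← exp_add]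
  congr 1
  field_simp
  ring

lemma integrable_exp_quadratic {α : ℝ} (hα : 0 < α) (β γ : ℝ) :
    Integrable fun y => exp (β * y + γ - α * y ^ 2) := by
  simp only [exp_quadratic_eq_mul_exp_neg_mul_sq hα.ne']
  exact ((integrable_exp_neg_mul_sq hα).comp_sub_right _).const_mul _

lemma integral_exp_quadratic {α : ℝ} (hα : 0 < α) (β γ : ℝ) :
    ∫ y, exp (β * y + γ - α * y ^ 2) = √(π / α) * exp (β ^ 2 / (4 * α) + γ) := by
  simp only [exp_quadratic_eq_mul_exp_neg_mul_sq hα.ne']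
  rw [integral_const_mul, integral_sub_right_eq_self (fun y => exp (-α * y ^ 2)),
    integral_gaussian, mul_comm]

lemma gaussianPDFReal_toNNReal {v : ℝ} (hv : 0 ≤ v) (m z : ℝ) :
    gaussianPDFReal m v.toNNReal z = (√(2 * π * v))⁻¹ * exp (-(z - m) ^ 2 / (2 * v)) := by
  rw [gaussianPDFReal, Real.coe_toNNReal _ hv]

lemma integrable_gaussianReal_iff {m : ℝ} {v : NNReal} (hv : v ≠ 0) {g : ℝ → ℝ} :
    Integrable g (gaussianReal m v) ↔ Integrable fun x => gaussianPDFReal m v x * g x := by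
  rw [gaussianReal_of_var_ne_zero _ hv, integrable_withDensity_iff_integrable_smul'
    (measurable_gaussianPDF _ _) (ae_of_all _ fun _ => gaussianPDF_lt_top)]
  simp only [gaussianPDF, ENNReal.toReal_ofReal (gaussianPDFReal_nonneg _ _ _), smul_eq_mul]

variable {t s : ℝ}

lemma gaussianPDFReal_mul_exp_mul_sq (ht : 0 < t) (x : ℝ) :
    gaussianPDFReal 0 t.toNNReal x * exp (s * x ^ 2)
      = (√(2 * π * t))⁻¹ * exp (0 * x + 0 - (1 / (2 * t) - s) * x ^ 2) := by
  rw [gaussianPDFReal_toNNReal ht.le, mul_assoc, ← exp_add]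
  congr 2
  field_simp
  ring

lemma one_div_two_mul_sub_pos (ht : 0 < t) (hs : 2 * s * t < 1) : 0 < 1 / (2 * t) - s := by
  rw [sub_pos, lt_div_iff₀ (by positivity)]
  linarith

lemma integrable_exp_mul_sq_gaussianReal (ht : 0 < t) (hs : 2 * s * t < 1) :
    Integrable (fun x => exp (s * x ^ 2)) (gaussianReal 0 t.toNNReal) := by
  rw [integrable_gaussianReal_iff (by simpa using ht)]
  simp only [gaussianPDFReal_mul_exp_mul_sq ht]
  exact (integrable_exp_quadratic (one_div_two_mul_sub_pos ht hs) _ _).const_mul _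

lemma integral_exp_mul_sq_gaussianReal (ht : 0 < t) (hs : 2 * s * t < 1) :
    ∫ x, exp (s * x ^ 2) ∂gaussianReal 0 t.toNNReal = (√(1 - 2 * s * t))⁻¹ := by
  rw [integral_gaussianReal_eq_integral_smul (by simpa using ht)]
  simp only [smul_eq_mul, gaussianPDFReal_mul_exp_mul_sq ht]
  rw [integral_const_mul, integral_exp_quadratic (one_div_two_mul_sub_pos ht hs)]
  have h12 : 0 < 1 - 2 * s * t := by linarith
  simp only [zero_pow two_ne_zero, zero_div, add_zero, exp_zero, mul_one]
  rw [← sqrt_inv, ← sqrt_mul (by positivity), ← sqrt_inv]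
  congr 1
  field_simp

lemma integral_gaussianReal_eq_integral_const_add {f : ℝ → ℝ} (m : ℝ) (w : NNReal) :
    ∫ z, f z ∂gaussianReal m w = ∫ u, f (m + u) ∂gaussianReal 0 w := by
  rw [← (measurableEmbedding_addLeft m).integral_map, gaussianReal_map_const_add, zero_add]

lemma integral_integral_gaussianReal {f : ℝ → ℝ} {c m : ℝ} {v w : NNReal}
    (hf : Integrable f (gaussianReal (c * m) (.mk (c ^ 2) (sq_nonneg c) * v + w))) :
    ∫ y, (∫ z, f z ∂gaussianReal (c * y) w) ∂gaussianReal m v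
      = ∫ z, f z ∂gaussianReal (c * m) (.mk (c ^ 2) (sq_nonneg c) * v + w) := by
  have hconv : gaussianReal (c * m) (.mk (c ^ 2) (sq_nonneg c) * v + w)
      = (gaussianReal m v).map (c * ·) ∗ gaussianReal 0 w := by
    rw [gaussianReal_map_const_mul, gaussianReal_conv_gaussianReal, add_zero]
  rw [hconv] at hf ⊢
  simp only [integral_gaussianReal_eq_integral_const_add (c * _) w]
  rw [integral_conv hf, integral_map (by fun_prop)]
  exact (hf.1.comp_measurable measurable_add).integral_prod_right'

end GaussianIntegrals

noncomputable def gaussianDensityRatio (m v t z : ℝ) : ℝ :=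
  gaussianPDFReal m v.toNNReal z / gaussianPDFReal 0 t.toNNReal z

section DensityRatio

variable {m v t : ℝ}

lemma measurable_gaussianDensityRatio : Measurable (gaussianDensityRatio m v t) :=
  (measurable_gaussianPDFReal _ _).div (measurable_gaussianPDFReal _ _)

lemma gaussianDensityRatio_nonneg (z : ℝ) : 0 ≤ gaussianDensityRatio m v t z :=
  div_nonneg (gaussianPDFReal_nonneg _ _ _) (gaussianPDFReal_nonneg _ _ _)

lemma gaussianPDFReal_mul_gaussianDensityRatio (ht : 0 < t) (z : ℝ) :
    gaussianPDFReal 0 t.toNNReal z * gaussianDensityRatio m v t z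
      = gaussianPDFReal m v.toNNReal z :=
  mul_div_cancel₀ _ (gaussianPDFReal_pos _ _ _ (by simpa using ht)).ne'

lemma gaussianReal_eq_withDensity_gaussianDensityRatio (ht : 0 < t) (hv : 0 < v) :
    gaussianReal m v.toNNReal = (gaussianReal 0 t.toNNReal).withDensity
      fun z => ENNReal.ofReal (gaussianDensityRatio m v t z) := by
  rw [gaussianReal_of_var_ne_zero _ (by simpa using hv),
    gaussianReal_of_var_ne_zero _ (by simpa using ht),
    ← withDensity_mul _ (measurable_gaussianPDF _ _)
      measurable_gaussianDensityRatio.ennreal_ofReal]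
  congr 1
  ext z
  simp only [Pi.mul_apply, gaussianPDF, ← ENNReal.ofReal_mul (gaussianPDFReal_nonneg _ _ _),
    gaussianPDFReal_mul_gaussianDensityRatio ht]

lemma integral_gaussianDensityRatio (ht : 0 < t) (hv : 0 < v) :
    ∫ z, gaussianDensityRatio m v t z ∂gaussianReal 0 t.toNNReal = 1 := by
  rw [integral_gaussianReal_eq_integral_smul (by simpa using ht)]
  simp only [smul_eq_mul, gaussianPDFReal_mul_gaussianDensityRatio ht]
  exact integral_gaussianPDFReal_eq_one _ (by simpa using hv)

lemma gaussianPDFReal_mul_sq_gaussianDensityRatio (ht : 0 < t) (hv : 0 < v) (z : ℝ) :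
    gaussianPDFReal 0 t.toNNReal z * gaussianDensityRatio m v t z ^ 2
      = √(2 * π * t) / (2 * π * v)
        * exp (2 * m / v * z + -m ^ 2 / v - (1 / v - 1 / (2 * t)) * z ^ 2) := by
  have hpos := gaussianPDFReal_pos 0 t.toNNReal z (by simpa using ht)
  have hexp : exp (-(z - m) ^ 2 / (2 * v)) ^ 2
      = exp (2 * m / v * z + -m ^ 2 / v - (1 / v - 1 / (2 * t)) * z ^ 2)
        * exp (-(z - 0) ^ 2 / (2 * t)) := by
    rw [sq, ← exp_add, ← exp_add]
    congr 1
    field_simp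
    ring
  have hsq : √(2 * π * v) ^ 2 = 2 * π * v := sq_sqrt (by positivity)
  rw [sq, ← mul_assoc, gaussianPDFReal_mul_gaussianDensityRatio ht, gaussianDensityRatio,
    mul_div_assoc', div_eq_iff hpos.ne', ← sq, gaussianPDFReal_toNNReal ht.le,
    gaussianPDFReal_toNNReal hv.le, mul_pow, hexp, inv_pow, hsq]
  have : 0 < √(2 * π * t) := sqrt_pos.2 (by positivity)
  field_simp

lemma memLp_gaussianDensityRatio (ht : 0 < t) (hv : 0 < v) (hv2 : v < 2 * t) :
    MemLp (gaussianDensityRatio m v t) 2 (gaussianReal 0 t.toNNReal) := by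
  have hα : 0 < 1 / v - 1 / (2 * t) := sub_pos.2 (one_div_lt_one_div_of_lt hv hv2)
  refine (memLp_two_iff_integrable_sq
    measurable_gaussianDensityRatio.aestronglyMeasurable).2 ?_
  rw [integrable_gaussianReal_iff (by simpa using ht)]
  simp only [gaussianPDFReal_mul_sq_gaussianDensityRatio ht hv]
  exact (integrable_exp_quadratic hα _ _).const_mul _

lemma integral_sq_gaussianDensityRatio (ht : 0 < t) (hv : 0 < v) (hv2 : v < 2 * t) :
    ∫ z, gaussianDensityRatio m v t z ^ 2 ∂gaussianReal 0 t.toNNReal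
      = t / √(v * (2 * t - v)) * exp (m ^ 2 / (2 * t - v)) := by
  have hα : 0 < 1 / v - 1 / (2 * t) := sub_pos.2 (one_div_lt_one_div_of_lt hv hv2)
  have h2tv : 0 < 2 * t - v := by linarith
  rw [integral_gaussianReal_eq_integral_smul (by simpa using ht)]
  simp only [smul_eq_mul, gaussianPDFReal_mul_sq_gaussianDensityRatio ht hv]
  rw [integral_const_mul, integral_exp_quadratic hα, ← mul_assoc]
  have hexp : (2 * m / v) ^ 2 / (4 * (1 / v - 1 / (2 * t))) + -m ^ 2 / v
      = m ^ 2 / (2 * t - v) := by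
    field_simp
    ring
  have hconst : √(2 * π * t) / (2 * π * v) * √(π / (1 / v - 1 / (2 * t)))
      = t / √(v * (2 * t - v)) := by
    rw [div_mul_eq_mul_div, ← sqrt_mul (by positivity),
      ← sqrt_sq (by positivity : 0 ≤ 2 * π * v), ← sqrt_div (by positivity),
      show t / √(v * (2 * t - v)) = √(t ^ 2 / (v * (2 * t - v))) by
        rw [sqrt_div (sq_nonneg _), sqrt_sq ht.le]]
    congr 1
    field_simp
  rw [hexp, hconst]

lemma integrable_gaussianReal_of_memLp (ht : 0 < t) (hv : 0 < v) (hv2 : v < 2 * t)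
    {f : ℝ → ℝ} (hf : MemLp f 2 (gaussianReal 0 t.toNNReal)) :
    Integrable f (gaussianReal m v.toNNReal) := by
  rw [gaussianReal_eq_withDensity_gaussianDensityRatio ht hv]
  exact integrable_withDensity_ofReal_of_memLp_two measurable_gaussianDensityRatio
    gaussianDensityRatio_nonneg (memLp_gaussianDensityRatio ht hv hv2) hf

lemma sq_integral_gaussianReal_sub_integral_le (ht : 0 < t) (hv : 0 < v) (hv2 : v < 2 * t)
    {f : ℝ → ℝ} (hf : MemLp f 2 (gaussianReal 0 t.toNNReal)) :
    (∫ z, f z ∂gaussianReal m v.toNNReal - ∫ z, f z ∂gaussianReal 0 t.toNNReal) ^ 2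
      ≤ Var[f; gaussianReal 0 t.toNNReal]
        * (t / √(v * (2 * t - v)) * exp (m ^ 2 / (2 * t - v)) - 1) := by
  have hr2 := memLp_gaussianDensityRatio (m := m) ht hv hv2
  rw [gaussianReal_eq_withDensity_gaussianDensityRatio ht hv]
  refine (sq_integral_withDensity_sub_integral_le measurable_gaussianDensityRatio
    gaussianDensityRatio_nonneg hr2 (integral_gaussianDensityRatio ht hv) hf).trans_eq ?_
  rw [variance_eq_sub hr2]
  simp only [Pi.pow_apply, integral_sq_gaussianDensityRatio ht hv hv2,
    integral_gaussianDensityRatio ht hv, one_pow]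

end DensityRatio

noncomputable def mehlerOp (t b : ℝ) (f : ℝ → ℝ) (x : ℝ) : ℝ :=
  ∫ z, f z ∂gaussianReal (b * x) (t * (1 - b ^ 2)).toNNReal

/-- The χ²-divergence of `𝒩(bx, t(1-b²))` from `𝒩(0, t)`. -/
noncomputable def mehlerChiSq (t b x : ℝ) : ℝ :=
  (√((1 - b ^ 2) * (1 + b ^ 2)))⁻¹ * exp (b ^ 2 / (t * (1 + b ^ 2)) * x ^ 2) - 1

section Mehler

variable {t b : ℝ}

lemma sq_mehlerOp_sub_integral_le (ht : 0 < t) (hb : b ^ 2 < 1) {f : ℝ → ℝ}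
    (hf : MemLp f 2 (gaussianReal 0 t.toNNReal)) (x : ℝ) :
    (mehlerOp t b f x - ∫ z, f z ∂gaussianReal 0 t.toNNReal) ^ 2
      ≤ Var[f; gaussianReal 0 t.toNNReal] * mehlerChiSq t b x := by
  have h1b : 0 < 1 - b ^ 2 := by linarith
  have hv : 0 < t * (1 - b ^ 2) := by positivity
  have h2tv : 2 * t - t * (1 - b ^ 2) = t * (1 + b ^ 2) := by ring
  have hK : t / √(t * (1 - b ^ 2) * (2 * t - t * (1 - b ^ 2)))
      = (√((1 - b ^ 2) * (1 + b ^ 2)))⁻¹ := by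
    rw [h2tv, show t * (1 - b ^ 2) * (t * (1 + b ^ 2)) = t ^ 2 * ((1 - b ^ 2) * (1 + b ^ 2)) by
      ring, sqrt_mul (sq_nonneg t), sqrt_sq ht.le]
    field_simp
  have h := sq_integral_gaussianReal_sub_integral_le (m := b * x) ht hv (by nlinarith) hf
  rwa [hK, h2tv, show (b * x) ^ 2 / (t * (1 + b ^ 2)) = b ^ 2 / (t * (1 + b ^ 2)) * x ^ 2 by
    ring] at h

lemma two_mul_mehler_exponent_lt_one (ht : 0 < t) (hb : b ^ 2 < 1) :
    2 * (b ^ 2 / (t * (1 + b ^ 2))) * t < 1 := by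
  rw [← sub_pos]
  field_simp
  linarith

lemma integrable_mehlerChiSq (ht : 0 < t) (hb : b ^ 2 < 1) :
    Integrable (mehlerChiSq t b) (gaussianReal 0 t.toNNReal) :=
  ((integrable_exp_mul_sq_gaussianReal ht (two_mul_mehler_exponent_lt_one ht hb)).const_mul
    _).sub (integrable_const 1)

lemma integral_mehlerChiSq (ht : 0 < t) (hb : b ^ 2 < 1) :
    ∫ x, mehlerChiSq t b x ∂gaussianReal 0 t.toNNReal = b ^ 2 / (1 - b ^ 2) := by
  have hs := two_mul_mehler_exponent_lt_one ht hb
  have h1b : 0 < 1 - b ^ 2 := by linarith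
  unfold mehlerChiSq
  rw [integral_sub ((integrable_exp_mul_sq_gaussianReal ht hs).const_mul _)
    (integrable_const 1), integral_const_mul, integral_exp_mul_sq_gaussianReal ht hs,
    integral_const, probReal_univ, one_smul, ← mul_inv, ← sqrt_mul (by positivity),
    show (1 - b ^ 2) * (1 + b ^ 2) * (1 - 2 * (b ^ 2 / (t * (1 + b ^ 2))) * t)
      = (1 - b ^ 2) ^ 2 by
      field_simp; ring, sqrt_sq h1b.le]
  field_simp
  ring

lemma eLpNorm_mehlerOp_sub_integral_le (ht : 0 < t) (hb : b ^ 2 < 1) {f : ℝ → ℝ}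
    (hf : MemLp f 2 (gaussianReal 0 t.toNNReal)) :
    eLpNorm (fun x => mehlerOp t b f x - ∫ z, f z ∂gaussianReal 0 t.toNNReal) 2
        (gaussianReal 0 t.toNNReal)
      ≤ ENNReal.ofReal (|b| / √(1 - b ^ 2)) * eLpNorm f 2 (gaussianReal 0 t.toNNReal) := by
  have h1b : 0 < 1 - b ^ 2 := by linarith
  refine (eLpNorm_two_le_of_sq_le ((integrable_mehlerChiSq ht hb).const_mul _)
    (sq_mehlerOp_sub_integral_le ht hb hf)).trans ?_
  rw [integral_const_mul, integral_mehlerChiSq ht hb, sqrt_mul' _ (by positivity),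
    sqrt_div' _ h1b.le, sqrt_sq_eq_abs, ENNReal.ofReal_mul (sqrt_nonneg _), mul_comm]
  gcongr
  exact ofReal_sqrt_variance_le_eLpNorm hf

end Mehler

lemma barQfun_mehlerOp {a σ b : ℝ} (ha : a ^ 2 < 1) (hσ : 0 < σ) (hb : b ^ 2 < 1) {f : ℝ → ℝ}
    (hf : MemLp f 2 (gaussianReal 0 (σ ^ 2 / (1 - a ^ 2)).toNNReal)) :
    barQfun a σ (mehlerOp (σ ^ 2 / (1 - a ^ 2)) b f)
      = mehlerOp (σ ^ 2 / (1 - a ^ 2)) (b * a) f := by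
  set t := σ ^ 2 / (1 - a ^ 2)
  have h1a : 0 < 1 - a ^ 2 := by linarith
  have ht : 0 < t := by positivity
  have hσt : σ ^ 2 = t * (1 - a ^ 2) := (div_mul_cancel₀ _ h1a.ne').symm
  have hba : (b * a) ^ 2 < 1 := by
    rw [mul_pow]
    nlinarith [sq_nonneg a, sq_nonneg b]
  have hvar : (.mk (b ^ 2) (sq_nonneg b) * (σ ^ 2).toNNReal
      + (t * (1 - b ^ 2)).toNNReal : NNReal) = (t * (1 - (b * a) ^ 2)).toNNReal := by
    ext
    rw [NNReal.coe_add, NNReal.coe_mul, NNReal.coe_mk, Real.coe_toNNReal _ (sq_nonneg σ),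
      Real.coe_toNNReal _ (by nlinarith), Real.coe_toNNReal _ (by nlinarith), hσt]
    ring
  ext x
  have hint : Integrable f (gaussianReal (b * (a * x)) (t * (1 - (b * a) ^ 2)).toNNReal) :=
    integrable_gaussianReal_of_memLp ht (by nlinarith) (by nlinarith [sq_nonneg (b * a)]) hf
  rw [← hvar] at hint
  rw [barQfun, mehlerOp, ← hvar, mul_assoc, ← integral_integral_gaussianReal hint]
  rfl

lemma sq_pow_lt_one {a : ℝ} (ha : a ^ 2 < 1) {n : ℕ} (hn : n ≠ 0) : (a ^ n) ^ 2 < 1 := by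
  rw [← pow_mul, mul_comm, pow_mul]
  exact pow_lt_one₀ (sq_nonneg a) ha hn

lemma barQfunIter_succ_eq_mehlerOp {a σ : ℝ} (ha : a ^ 2 < 1) (hσ : 0 < σ) {f : ℝ → ℝ}
    (hf : MemLp f 2 (gaussianReal 0 (σ ^ 2 / (1 - a ^ 2)).toNNReal)) (n : ℕ) :
    barQfunIter a σ (n + 1) f = mehlerOp (σ ^ 2 / (1 - a ^ 2)) (a ^ (n + 1)) f := by
  induction n with
  | zero =>
    ext x
    simp [barQfunIter, barQfun, mehlerOp, div_mul_cancel₀ _ (sub_pos.2 ha).ne']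
  | succ n ih =>
    rw [barQfunIter, Function.iterate_succ_apply', ← barQfunIter, ih,
      barQfun_mehlerOp ha hσ (sq_pow_lt_one ha n.succ_ne_zero) hf, ← pow_succ]

/-- For the symmetric BAR kernel `𝒬(x,·) = 𝒩(ax, σ²)`, `a ∈ (-1,1)`, `σ > 0`, with
invariant measure `μ = 𝒩(0, σ²/(1-a²))`: `𝒬` is `L²(μ)`-exponentially convergent with
rate `|a|`, i.e. there exists a finite constant `M` with
`‖𝒬ⁿ f − ⟨μ,f⟩‖_{L²(μ)} ≤ M |a|ⁿ ‖f‖_{L²(μ)}` for all `f ∈ L²(μ)` and `n ∈ ℕ`. -/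
theorem barQ_L2_exponentially_convergent (a σ : ℝ)
    (ha : a ∈ Set.Ioo (-1 : ℝ) 1) (hσ : 0 < σ) :
    ∃ M : ℝ, ∀ f : ℝ → ℝ,
      MemLp f 2 (gaussianReal 0 (Real.toNNReal (σ ^ 2 / (1 - a ^ 2)))) → ∀ n : ℕ,
        eLpNorm
            (fun x => barQfunIter a σ n f x
              - ∫ y, f y ∂(gaussianReal 0 (Real.toNNReal (σ ^ 2 / (1 - a ^ 2)))))
            2 (gaussianReal 0 (Real.toNNReal (σ ^ 2 / (1 - a ^ 2))))
          ≤ ENNReal.ofReal (M * |a| ^ n)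
            * eLpNorm f 2 (gaussianReal 0 (Real.toNNReal (σ ^ 2 / (1 - a ^ 2)))) := by
  have ha2 : a ^ 2 < 1 := by nlinarith [ha.1, ha.2]
  have h1a : 0 < 1 - a ^ 2 := by linarith
  refine ⟨(√(1 - a ^ 2))⁻¹, fun f hf n => ?_⟩
  cases n with
  | zero =>
    refine (eLpNorm_sub_integral_le hf).trans (le_mul_of_one_le_left (by positivity) ?_)
    rw [pow_zero, mul_one, ENNReal.one_le_ofReal, one_le_inv₀ (sqrt_pos.2 h1a)]
    exact sqrt_le_one.2 (by linarith [sq_nonneg a])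
  | succ n =>
    rw [barQfunIter_succ_eq_mehlerOp ha2 hσ hf]
    refine (eLpNorm_mehlerOp_sub_integral_le (by positivity) (sq_pow_lt_one ha2 n.succ_ne_zero)
      hf).trans ?_
    gcongr
    rw [abs_pow, div_eq_mul_inv, mul_comm]
    have : (a ^ (n + 1)) ^ 2 ≤ a ^ 2 := by
      rw [← pow_mul, mul_comm, pow_mul]
      exact pow_le_of_le_one (sq_nonneg a) ha2.le n.succ_ne_zero
    gcongr
end

section
/- For the symmetric BAR kernel 𝒬(x,·) = 𝒩(ax, σ²) with a ∈ (−1,1), σ > 0, invariant measure μ = 𝒩(0, σ_a²) with σ_a² = σ²/(1−a²), and density q(x,y) = (1−a²)^{-1/2} exp(−(a²y² + a²x² − 2axy)/(2σ²)) of 𝒬(x,·) with respect to μ, the function 𝔥(x) = (∫_ℝ q(x,y)² μ(dy))^{1/2} equals 𝔥(x) = (1−a⁴)^{-1/4} exp( (a²(1−a²)/(1+a²)) · x²/(2σ²) ) for all x ∈ ℝ, and 𝔥 ∈ L²(μ), i.e. ∫_{ℝ²} q(x,y)² μ(dx)μ(dy) < ∞. -/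
/-!
Multiplying `q(x,y)²` by the Gaussian density of `μ` gives again an unnormalised Gaussian in `y`,
so `∫ q(x,y)² μ(dy)` is an explicit Gaussian integral, computed by completing the square.
The result `𝔥(x)²` is itself `exp` of a quadratic in `x` whose coefficient
`a²(1-a²)/((1+a²)σ²)` is below `1/(2σ_a²) = (1-a²)/(2σ²)`, so it is again `μ`-integrable.
-/

open MeasureTheory ProbabilityTheory

/-- The density `q(x,y)` of the symmetric BAR kernel `𝒬(x,·) = 𝒩(ax,σ²)` with respect to
its invariant measure `μ = 𝒩(0, σ²/(1-a²))`:
`q(x,y) = (1-a²)^{-1/2} exp(-(a²y² + a²x² - 2axy)/(2σ²))`. -/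
noncomputable def barq (a σ : ℝ) (x y : ℝ) : ℝ :=
  (1 / Real.sqrt (1 - a ^ 2))
    * Real.exp (-(a ^ 2 * y ^ 2 + a ^ 2 * x ^ 2 - 2 * a * x * y) / (2 * σ ^ 2))

open Real
open scoped NNReal

theorem integral_exp_neg_mul_sq_add_mul {b : ℝ} (hb : 0 < b) (c : ℝ) :
    ∫ x : ℝ, exp (-b * x ^ 2 + c * x) = √(π / b) * exp (c ^ 2 / (4 * b)) := by
  have h_square (x : ℝ) : exp (-b * x ^ 2 + c * x)
      = exp (c ^ 2 / (4 * b)) * exp (-b * (x - c / (2 * b)) ^ 2) := by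
    rw [← exp_add]; congr 1; field_simp; ring
  simp_rw [h_square]
  rw [integral_const_mul, integral_sub_right_eq_self (fun x ↦ exp (-b * x ^ 2)),
    integral_gaussian, mul_comm]

theorem integral_exp_quadratic_gaussianReal {v : ℝ≥0} {β : ℝ} (hβ : 0 < 1 + 2 * β * v) (c : ℝ) :
    ∫ y, exp (-β * y ^ 2 + c * y) ∂gaussianReal 0 v
      = (√(1 + 2 * β * v))⁻¹ * exp (c ^ 2 * v / (2 * (1 + 2 * β * v))) := by
  rcases eq_or_ne v 0 with rfl | hv
  · simp [gaussianReal_zero_var]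
  have hv' : (0 : ℝ) < v := by positivity
  have h_density (y : ℝ) : gaussianPDFReal 0 v y • exp (-β * y ^ 2 + c * y)
      = (√(2 * π * v))⁻¹ * exp (-((1 + 2 * β * v) / (2 * v)) * y ^ 2 + c * y) := by
    rw [gaussianPDFReal, smul_eq_mul, mul_assoc, ← exp_add]
    congr 2
    field_simp
    ring
  simp_rw [integral_gaussianReal_eq_integral_smul hv, h_density]
  rw [integral_const_mul, integral_exp_neg_mul_sq_add_mul (by positivity), ← mul_assoc]
  congr 1
  · rw [div_div_eq_mul_div, sqrt_div' _ hβ.le]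
    field_simp
  · congr 1; field_simp; ring

theorem integrable_exp_quadratic_gaussianReal {v : ℝ≥0} {β : ℝ} (hβ : 0 < 1 + 2 * β * v) (c : ℝ) :
    Integrable (fun y ↦ exp (-β * y ^ 2 + c * y)) (gaussianReal 0 v) := by
  refine Integrable.of_integral_ne_zero ?_
  rw [integral_exp_quadratic_gaussianReal hβ]
  positivity

section BAR

variable {a σ : ℝ}

theorem barq_sq (ha : a ^ 2 ≤ 1) (x y : ℝ) :
    barq a σ x y ^ 2 = (1 - a ^ 2)⁻¹ * exp (-(a ^ 2 * x ^ 2 / σ ^ 2))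
      * exp (-(a ^ 2 / σ ^ 2) * y ^ 2 + 2 * a * x / σ ^ 2 * y) := by
  rw [mul_assoc, ← exp_add, barq, mul_pow, div_pow, one_pow, sq_sqrt (by linarith), one_div,
    ← exp_nat_mul]
  congr 2
  ring

variable (a σ) in
/-- The paper's `𝔥`, in closed form. -/
noncomputable def barh (x : ℝ) : ℝ :=
  (1 - a ^ 4) ^ (-(1 : ℝ) / 4) * exp ((a ^ 2 * (1 - a ^ 2) / (1 + a ^ 2)) * (x ^ 2 / (2 * σ ^ 2)))

theorem barh_pos (ha : a ^ 2 < 1) (x : ℝ) : 0 < barh a σ x := by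
  have : 0 < 1 - a ^ 4 := by nlinarith
  unfold barh
  positivity

theorem barh_sq (ha : a ^ 2 ≤ 1) (x : ℝ) :
    barh a σ x ^ 2
      = (√(1 - a ^ 4))⁻¹ * exp ((a ^ 2 * (1 - a ^ 2) / (1 + a ^ 2)) * (x ^ 2 / σ ^ 2)) := by
  have : 0 ≤ 1 - a ^ 4 := by nlinarith
  rw [barh, mul_pow, ← rpow_natCast, ← rpow_mul this, sqrt_eq_rpow, ← rpow_neg this,
    ← exp_nat_mul]
  congr 2
  · norm_num
  · ring

theorem coe_toNNReal_barVariance (ha : a ^ 2 < 1) :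
    ((σ ^ 2 / (1 - a ^ 2)).toNNReal : ℝ) = σ ^ 2 / (1 - a ^ 2) :=
  coe_toNNReal _ (div_nonneg (sq_nonneg σ) (by linarith))

theorem integral_barq_sq (ha : a ^ 2 < 1) (hσ : σ ≠ 0) (x : ℝ) :
    ∫ y, barq a σ x y ^ 2 ∂gaussianReal 0 (σ ^ 2 / (1 - a ^ 2)).toNNReal = barh a σ x ^ 2 := by
  have hs : 0 < 1 - a ^ 2 := by linarith
  have h_var : 1 + 2 * (a ^ 2 / σ ^ 2) * (σ ^ 2 / (1 - a ^ 2)) = (1 + a ^ 2) / (1 - a ^ 2) := by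
    field_simp; ring
  simp_rw [barq_sq ha.le, integral_const_mul]
  rw [integral_exp_quadratic_gaussianReal (by rw [coe_toNNReal_barVariance ha]; positivity),
    coe_toNNReal_barVariance ha, h_var, barh_sq ha.le, mul_mul_mul_comm, ← exp_add]
  congr 1
  · rw [← mul_inv, show 1 - a ^ 4 = (1 - a ^ 2) ^ 2 * ((1 + a ^ 2) / (1 - a ^ 2)) by
      field_simp; ring, sqrt_mul (by positivity), sqrt_sq hs.le]
  · congr 1; field_simp; ring

theorem integrable_barq_sq (ha : a ^ 2 < 1) (hσ : σ ≠ 0) (x : ℝ) :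
    Integrable (fun y ↦ barq a σ x y ^ 2) (gaussianReal 0 (σ ^ 2 / (1 - a ^ 2)).toNNReal) := by
  refine Integrable.of_integral_ne_zero ?_
  rw [integral_barq_sq ha hσ]
  exact (pow_pos (barh_pos ha x) 2).ne'

theorem integrable_barh_sq (ha : a ^ 2 < 1) (hσ : σ ≠ 0) :
    Integrable (fun x ↦ barh a σ x ^ 2) (gaussianReal 0 (σ ^ 2 / (1 - a ^ 2)).toNNReal) := by
  set d := a ^ 2 * (1 - a ^ 2) / (1 + a ^ 2) with hd
  have h_quadratic (x : ℝ) :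
      barh a σ x ^ 2 = (√(1 - a ^ 4))⁻¹ * exp (-(-d / σ ^ 2) * x ^ 2 + 0 * x) := by
    rw [barh_sq ha.le]; congr 2; ring
  have h_coeff : 1 + 2 * (-d / σ ^ 2) * (σ ^ 2 / (1 - a ^ 2)) = (1 - a ^ 2) / (1 + a ^ 2) := by
    have : 1 - a ^ 2 ≠ 0 := by linarith
    rw [hd]; field_simp; ring
  simp_rw [h_quadratic]
  refine (integrable_exp_quadratic_gaussianReal ?_ 0).const_mul _
  rw [coe_toNNReal_barVariance ha, h_coeff]
  exact div_pos (by linarith) (by positivity)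

end BAR

/-- For the symmetric BAR model, the function `𝔥(x) = (∫ q(x,y)² μ(dy))^{1/2}` equals
`(1-a⁴)^{-1/4} exp((a²(1-a²)/(1+a²)) x²/(2σ²))`, and `𝔥 ∈ L²(μ)`, i.e.
`∫∫ q(x,y)² μ(dx) μ(dy) < ∞`. -/
theorem barq_h_formula (a σ : ℝ) (ha : a ∈ Set.Ioo (-1 : ℝ) 1) (hσ : 0 < σ) :
    (∀ x : ℝ,
        Real.sqrt (∫ y, (barq a σ x y) ^ 2
            ∂(gaussianReal 0 (Real.toNNReal (σ ^ 2 / (1 - a ^ 2)))))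
          = (1 - a ^ 4) ^ (-(1 : ℝ) / 4)
            * Real.exp ((a ^ 2 * (1 - a ^ 2) / (1 + a ^ 2)) * (x ^ 2 / (2 * σ ^ 2))))
      ∧ ∫⁻ x, (∫⁻ y, ENNReal.ofReal ((barq a σ x y) ^ 2)
            ∂(gaussianReal 0 (Real.toNNReal (σ ^ 2 / (1 - a ^ 2)))))
          ∂(gaussianReal 0 (Real.toNNReal (σ ^ 2 / (1 - a ^ 2)))) < ⊤ := by
  have ha2 : a ^ 2 < 1 := (sq_lt_one_iff_abs_lt_one a).mpr (abs_lt.mpr ha)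
  refine ⟨fun x ↦ ?_, ?_⟩
  · rw [integral_barq_sq ha2 hσ.ne', sqrt_sq (barh_pos ha2 x).le, barh]
  · simp_rw [← ofReal_integral_eq_lintegral_ofReal (integrable_barq_sq ha2 hσ.ne' _)
      (ae_of_all _ fun _ ↦ sq_nonneg _), integral_barq_sq ha2 hσ.ne']
    exact (integrable_barh_sq ha2 hσ.ne').lintegral_lt_top
end
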